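/- Let W be a finite type, p : W → ℝ → ℝ a parametric family of probability mass functions on W (in the parameter v), and L : ℝ → W → ℝ with v ↦ L v w differentiable for each w. Define the critic Q(v) = ∑_{w ∈ W} p w v · L v w. Then Q is differentiable and for every v, deriv Q v = ∑_{w ∈ W} p w v · ( (deriv of t ↦ L t w at v) + (deriv of t ↦ log (p w t) at v) · L v w ); i.e., the gradient of the critic equals the conditional expectation of the gradient of the surrogate loss (the gradient-critic). -/

import Mathlib

/-! The score-function identity `p * (log p)' = p'` turns the product rule
`(p L)' = p L' + p' L` into `p (L' + (log p)' L)` for each outcome; summing over the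
finitely many outcomes gives the gradient of the critic. -/

theorem mul_deriv_log_eq_deriv {f : ℝ → ℝ} {x : ℝ} (hf : DifferentiableAt ℝ f x)
    (hx : f x ≠ 0) : f x * deriv (fun t => Real.log (f t)) x = deriv f x := by
  rw [deriv.log hf hx, mul_div_cancel₀ _ hx]

theorem hasDerivAt_mul_logDeriv {f g : ℝ → ℝ} {x : ℝ} (hf : DifferentiableAt ℝ f x)
    (hx : f x ≠ 0) (hg : DifferentiableAt ℝ g x) :
    HasDerivAt (fun t => f t * g t)
      (f x * (deriv g x + deriv (fun t => Real.log (f t)) x * g x)) x := by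
  refine (hf.hasDerivAt.mul hg.hasDerivAt).congr_deriv ?_
  rw [mul_add, ← mul_assoc, mul_deriv_log_eq_deriv hf hx]
  ring

theorem gradient_of_critic_is_gradient_critic_general {W : Type*} [Fintype W]
    (p : W → ℝ → ℝ)
    (hpos : ∀ w v, 0 < p w v)
    (hdiff : ∀ w, Differentiable ℝ (p w))
    (L : ℝ → W → ℝ)
    (hL : ∀ w, Differentiable ℝ (fun v => L v w)) :
    ∀ v : ℝ, HasDerivAt (fun v => ∑ w, p w v * L v w)
      (∑ w, p w v * (deriv (fun t => L t w) v
        + deriv (fun t => Real.log (p w t)) v * L v w)) v :=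
  fun v => HasDerivAt.fun_sum fun w _ =>
    hasDerivAt_mul_logDeriv (hdiff w v) (hpos w v).ne' (hL w v)

/-- The gradient of the critic equals the conditional expectation of the gradient of
the surrogate loss (the gradient-critic): with critic `Q v = ∑ w, p w v * L v w`, `Q`
is differentiable with
`deriv Q v = ∑ w, p w v * (deriv (fun t => L t w) v + score w v * L v w)`. -/
theorem gradient_of_critic_is_gradient_critic {W : Type*} [Fintype W]
    (p : W → ℝ → ℝ)
    (hpos : ∀ w v, 0 < p w v)
    (hdiff : ∀ w, Differentiable ℝ (p w))
    (hsum : ∀ v : ℝ, ∑ w, p w v = 1)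
    (L : ℝ → W → ℝ)
    (hL : ∀ w, Differentiable ℝ (fun v => L v w)) :
    ∀ v : ℝ, HasDerivAt (fun v => ∑ w, p w v * L v w)
      (∑ w, p w v * (deriv (fun t => L t w) v
        + deriv (fun t => Real.log (p w t)) v * L v w)) v :=
  gradient_of_critic_is_gradient_critic_general p hpos hdiff L hL
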